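/- arXiv:2306.06509 — 4 statements merged into one kernel-verified Lean document; each statement's English description precedes it below -/
import Mathlib

section
/- Let H, A be real numbers, B a complex number, and define Q : ℂ² → ℝ by Q(v₁,v₂) = H(|v₁|⁴ + |v₂|⁴) + 4A|v₁|²|v₂|² + 2·Re(B·(v₁·conj(v₂))²). Then the supremum of Q over the unit sphere {(v₁,v₂) ∈ ℂ² : |v₁|² + |v₂|² = 1} equals max(H, (H + 2A + |B|)/2), and this supremum is attained. -/
/-!
On the unit sphere put `s = |v₁|²|v₂|² ∈ [0, 1/4]`. Then `|v₁|⁴ + |v₂|⁴ = 1 - 2s` and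
`Re(B (v₁ v̄₂)²) ≤ |B| s`, so `Q ≤ H + (4A + 2|B| - 2H) s`, an affine function of `s` whose
maximum over `[0, 1/4]` is `H` (at `s = 0`) or `(H + 2A + |B|)/2` (at `s = 1/4`). The first value
is attained at `(1, 0)`, the second at `(e^{-i arg B / 2}, 1)/√2`, where the phase makes
`B (v₁ v̄₂)²` equal to `|B|/4`.
-/

open Complex

lemma add_mul_le_max_of_mem_Icc {a c s t : ℝ} (hs : s ∈ Set.Icc 0 t) :
    a + c * s ≤ max a (a + c * t) := by
  obtain ⟨hs0, hst⟩ := hs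
  rcases le_total c 0 with hc | hc
  · exact le_max_of_le_left (by nlinarith)
  · exact le_max_of_le_right (by nlinarith)

lemma mul_le_quarter_of_add_eq_one {x y : ℝ} (h : x + y = 1) : x * y ≤ 1 / 4 := by
  nlinarith [sq_nonneg (x - y)]

lemma re_mul_sq_le_norm_mul (B z : ℂ) : (B * z ^ 2).re ≤ ‖B‖ * ‖z‖ ^ 2 :=
  (re_le_norm _).trans_eq (by rw [norm_mul, norm_pow])

lemma mul_exp_neg_arg_mul_I (B : ℂ) : B * exp (-(arg B * I)) = ‖B‖ := by
  nth_rw 1 [← norm_mul_exp_arg_mul_I B]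
  rw [mul_assoc, ← Complex.exp_add, add_neg_cancel, Complex.exp_zero, mul_one]

noncomputable def cheungForm (H A : ℝ) (B : ℂ) (v : ℂ × ℂ) : ℝ :=
  H * (‖v.1‖ ^ 4 + ‖v.2‖ ^ 4) + 4 * A * ‖v.1‖ ^ 2 * ‖v.2‖ ^ 2
    + 2 * (B * (v.1 * (starRingEnd ℂ) v.2) ^ 2).re

section cheungForm

variable (H A : ℝ) (B : ℂ)

lemma cheungForm_le {v : ℂ × ℂ} (hv : ‖v.1‖ ^ 2 + ‖v.2‖ ^ 2 = 1) :
    cheungForm H A B v ≤ max H ((H + 2 * A + ‖B‖) / 2) := by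
  set s := ‖v.1‖ ^ 2 * ‖v.2‖ ^ 2
  have hs : s ∈ Set.Icc 0 (1 / 4) := ⟨by positivity, mul_le_quarter_of_add_eq_one hv⟩
  have hre : (B * (v.1 * (starRingEnd ℂ) v.2) ^ 2).re ≤ ‖B‖ * s := by
    simpa [norm_mul, mul_pow] using re_mul_sq_le_norm_mul B (v.1 * (starRingEnd ℂ) v.2)
  have hquartic : ‖v.1‖ ^ 4 + ‖v.2‖ ^ 4 = 1 - 2 * s := by
    linear_combination (‖v.1‖ ^ 2 + ‖v.2‖ ^ 2 + 1) * hv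
  calc cheungForm H A B v ≤ H + (4 * A + 2 * ‖B‖ - 2 * H) * s := by
        rw [cheungForm, hquartic]; linarith
    _ ≤ max H (H + (4 * A + 2 * ‖B‖ - 2 * H) * (1 / 4)) := add_mul_le_max_of_mem_Icc hs
    _ = max H ((H + 2 * A + ‖B‖) / 2) := by ring_nf

lemma cheungForm_one_zero : cheungForm H A B (1, 0) = H := by
  simp [cheungForm]

noncomputable def balancedVector : ℂ × ℂ :=
  (exp (-(arg B / 2 : ℝ) * I) * ((√2)⁻¹ : ℝ), ((√2)⁻¹ : ℝ))

lemma norm_inv_sqrt_two_sq : ‖(((√2)⁻¹ : ℝ) : ℂ)‖ ^ 2 = 1 / 2 := by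
  rw [norm_real, Real.norm_of_nonneg (by positivity), inv_pow, Real.sq_sqrt zero_le_two,
    one_div]

lemma norm_balancedVector_sq :
    ‖(balancedVector B).1‖ ^ 2 = 1 / 2 ∧ ‖(balancedVector B).2‖ ^ 2 = 1 / 2 := by
  refine ⟨?_, norm_inv_sqrt_two_sq⟩
  rw [balancedVector, norm_mul, ← ofReal_neg, norm_exp_ofReal_mul_I, one_mul]
  exact norm_inv_sqrt_two_sq

lemma cheungForm_balancedVector :
    cheungForm H A B (balancedVector B) = (H + 2 * A + ‖B‖) / 2 := by
  obtain ⟨h₁, h₂⟩ := norm_balancedVector_sq B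
  have hphase : B * ((balancedVector B).1 * (starRingEnd ℂ) (balancedVector B).2) ^ 2
      = ((‖B‖ / 4 : ℝ) : ℂ) := by
    have hsq : ((((√2)⁻¹ : ℝ) : ℂ)) ^ 2 = 1 / 2 := by
      rw [← ofReal_pow, inv_pow, Real.sq_sqrt zero_le_two]; push_cast; ring
    have hexp : exp (-(arg B / 2 : ℝ) * I) ^ 2 = exp (-(arg B * I)) := by
      rw [← Complex.exp_nat_mul]; push_cast; ring_nf
    calc _ = B * exp (-(arg B / 2 : ℝ) * I) ^ 2 * ((((√2)⁻¹ : ℝ) : ℂ) ^ 2) ^ 2 := by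
          simp only [balancedVector, conj_ofReal]; ring
      _ = ((‖B‖ / 4 : ℝ) : ℂ) := by
          rw [hexp, mul_exp_neg_arg_mul_I, hsq]; push_cast; ring
  have h₄ : ∀ z : ℂ, ‖z‖ ^ 2 = 1 / 2 → ‖z‖ ^ 4 = 1 / 4 := fun z hz => by
    rw [show 4 = 2 * 2 from rfl, pow_mul, hz]; norm_num
  rw [cheungForm, hphase, ofReal_re, h₄ _ h₁, h₄ _ h₂, mul_assoc, h₁, h₂]
  ring

end cheungForm

/-- The supremum of the quartic form `Q` over the unit sphere of `ℂ²` equals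
`max H ((H + 2A + |B|)/2)`, and it is attained. -/
theorem cheung_sup (H A : ℝ) (B : ℂ) (Q : ℂ × ℂ → ℝ)
    (hQ : ∀ v : ℂ × ℂ, Q v =
      H * ((‖v.1‖) ^ 4 + (‖v.2‖) ^ 4)
        + 4 * A * (‖v.1‖) ^ 2 * (‖v.2‖) ^ 2
        + 2 * (B * (v.1 * (starRingEnd ℂ) v.2) ^ 2).re) :
    IsGreatest
      (Q '' {v : ℂ × ℂ | (‖v.1‖) ^ 2 + (‖v.2‖) ^ 2 = 1})
      (max H ((H + 2 * A + ‖B‖) / 2)) := by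
  obtain rfl : Q = cheungForm H A B := funext hQ
  refine ⟨?_, Set.forall_mem_image.2 fun v hv => cheungForm_le H A B hv⟩
  rcases le_total ((H + 2 * A + ‖B‖) / 2) H with h | h
  · rw [max_eq_left h]
    exact ⟨(1, 0), by simp, cheungForm_one_zero H A B⟩
  · rw [max_eq_right h]
    obtain ⟨h₁, h₂⟩ := norm_balancedVector_sq B
    exact ⟨balancedVector B, by norm_num [h₁, h₂],
      cheungForm_balancedVector H A B⟩
end

section
/- Let H, A be real numbers and B a complex number such that H + A < 0 and (1/2)(H² + 2A² + |B|²) < (H + A)². Then H < 0 and H + 2A + |B| < 0; consequently the quartic form Q(v₁,v₂) = H(|v₁|⁴ + |v₂|⁴) + 4A|v₁|²|v₂|² + 2·Re(B·(v₁·conj(v₂))²) is strictly negative at every (v₁,v₂) ∈ ℂ² with |v₁|² + |v₂|² = 1. -/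
/-!
Hypothesis `h2` says `|B|² < H(H + 4A)`. With `H + A < 0` this forces `H < 0`, then `H + 2A < 0`,
and as `H(H + 4A) = (H + 2A)² - 4A²` also `|B| < -(H + 2A)`. On the unit sphere, with
`p = |v₁|²`, `q = |v₂|²`, the form is at most `H(p² + q²) + (4A + 2|B|)pq`; since
`4pq ≤ (p + q)² = 1` this is the convex combination `(1 - 4pq)H + 4pq(H + 2A + |B|)/2 < 0`.
-/

lemma Complex.re_mul_mul_conj_sq_le (B z w : ℂ) :
    (B * (z * starRingEnd ℂ w) ^ 2).re ≤ ‖B‖ * (‖z‖ ^ 2 * ‖w‖ ^ 2) :=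
  calc (B * (z * starRingEnd ℂ w) ^ 2).re
      ≤ ‖B * (z * starRingEnd ℂ w) ^ 2‖ := Complex.re_le_norm _
    _ = ‖B‖ * (‖z‖ ^ 2 * ‖w‖ ^ 2) := by
      rw [norm_mul, norm_pow, norm_mul, Complex.norm_conj, mul_pow]

section

variable {H A b : ℝ}

lemma neg_of_add_neg_of_mul_add_four_mul_pos (h1 : H + A < 0) (h : 0 < H * (H + 4 * A)) :
    H < 0 := by
  by_contra! hH0
  nlinarith [mul_nonneg hH0 (show 0 ≤ -(H + 4 * A) by linarith)]

lemma add_two_mul_add_neg_of_sq_lt (h1 : H + A < 0) (h : b ^ 2 < H * (H + 4 * A)) :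
    H + 2 * A + b < 0 := by
  have hH : H < 0 := neg_of_add_neg_of_mul_add_four_mul_pos h1 ((sq_nonneg _).trans_lt h)
  have hH2A : H + 2 * A < 0 := by
    by_contra! hc
    nlinarith [mul_pos (neg_pos.2 hH) (show 0 < H + 4 * A by linarith)]
  have hb' : b ^ 2 < (-(H + 2 * A)) ^ 2 := by nlinarith [sq_nonneg A]
  linarith [(abs_lt_of_sq_lt_sq' hb' (by linarith)).2]

lemma quadratic_neg_of_add_eq_one {p q : ℝ} (hH : H < 0) (hc : H + 2 * A + b < 0)
    (hp : 0 ≤ p) (hq : 0 ≤ q) (hsum : p + q = 1) :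
    H * (p ^ 2 + q ^ 2) + 4 * A * p * q + 2 * b * p * q < 0 := by
  have ht : 4 * (p * q) ≤ 1 := by nlinarith [sq_nonneg (p - q)]
  have hconvex : H * (p ^ 2 + q ^ 2) + 4 * A * p * q + 2 * b * p * q
      = (1 - 4 * (p * q)) * H + 4 * (p * q) * ((H + 2 * A + b) / 2) := by
    linear_combination H * (p + q + 1) * hsum
  have hm : max H ((H + 2 * A + b) / 2) < 0 := max_lt hH (by linarith)
  calc _ = _ := hconvex
    _ ≤ (1 - 4 * (p * q)) * max H ((H + 2 * A + b) / 2)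
          + 4 * (p * q) * max H ((H + 2 * A + b) / 2) := by
      gcongr
      · exact le_max_left _ _
      · exact le_max_right _ _
    _ < 0 := by linarith

end

/-- Algebraic core of Cheung's Lemma 3.9: if `H + A < 0` and
`(1/2)(H² + 2A² + |B|²) < (H + A)²`, then `H < 0`, `H + 2A + |B| < 0`, and the
quartic form `Q` is strictly negative on the unit sphere of `ℂ²`. -/
theorem cheung_lemma_3_9 (H A : ℝ) (B : ℂ)
    (h1 : H + A < 0)
    (h2 : (1 / 2) * (H ^ 2 + 2 * A ^ 2 + (‖B‖) ^ 2) < (H + A) ^ 2) :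
    H < 0 ∧ H + 2 * A + ‖B‖ < 0 ∧
      ∀ v : ℂ × ℂ, (‖v.1‖) ^ 2 + (‖v.2‖) ^ 2 = 1 →
        H * ((‖v.1‖) ^ 4 + (‖v.2‖) ^ 4)
          + 4 * A * (‖v.1‖) ^ 2 * (‖v.2‖) ^ 2
          + 2 * (B * (v.1 * (starRingEnd ℂ) v.2) ^ 2).re < 0 := by
  have hB : ‖B‖ ^ 2 < H * (H + 4 * A) := by linarith
  have hH : H < 0 := neg_of_add_neg_of_mul_add_four_mul_pos h1 ((sq_nonneg _).trans_lt hB)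
  have hc : H + 2 * A + ‖B‖ < 0 := add_two_mul_add_neg_of_sq_lt h1 hB
  refine ⟨hH, hc, fun v hv => ?_⟩
  have hQ := quadratic_neg_of_add_eq_one hH hc (sq_nonneg ‖v.1‖) (sq_nonneg ‖v.2‖) hv
  have hre := Complex.re_mul_mul_conj_sq_le B v.1 v.2
  linarith
end

section
/- Let H, A be real numbers and B a complex number, and suppose the quartic form Q(v₁,v₂) = H(|v₁|⁴ + |v₂|⁴) + 4A|v₁|²|v₂|² + 2·Re(B·(v₁·conj(v₂))²) is strictly negative at every (v₁,v₂) ∈ ℂ² with |v₁|² + |v₂|² = 1. Then (1/2)(H² + 2A² + |B|²) < 3(H + A)². -/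
/-!
Testing `Q` at `(1, 0)` gives `H < 0`. Rotating `v₁` by a unit `u` with `B u² = |B|` and
testing at `(u, 1)/√2` gives `H + 2A + |B| < 0`. Then `|B|² < (H + 2A)²`, and the claim reduces
to `0 < H (H + 2A)`, a product of two negative numbers.
-/

open Complex

noncomputable def cheungQuartic (H A : ℝ) (B : ℂ) (v : ℂ × ℂ) : ℝ :=
  H * (‖v.1‖ ^ 4 + ‖v.2‖ ^ 4) + 4 * A * ‖v.1‖ ^ 2 * ‖v.2‖ ^ 2
    + 2 * (B * (v.1 * (starRingEnd ℂ) v.2) ^ 2).re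

theorem exists_norm_eq_one_mul_sq_eq_norm (B : ℂ) : ∃ u : ℂ, ‖u‖ = 1 ∧ B * u ^ 2 = ‖B‖ := by
  refine ⟨exp (↑(-(arg B / 2)) * I), norm_exp_ofReal_mul_I _, ?_⟩
  calc B * exp (↑(-(arg B / 2)) * I) ^ 2
      = ‖B‖ * (exp (arg B * I) * exp (-(arg B * I))) := by
        rw [← exp_nat_mul]
        nth_rw 1 [← norm_mul_exp_arg_mul_I B]
        push_cast
        ring_nf
    _ = ‖B‖ := by rw [← exp_add, add_neg_cancel, exp_zero, mul_one]

theorem cheungQuartic_one_zero (H A : ℝ) (B : ℂ) : cheungQuartic H A B (1, 0) = H := by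
  simp [cheungQuartic]

theorem cheungQuartic_ofReal_mul {H A : ℝ} {B u : ℂ} (hu : ‖u‖ = 1) (hBu : B * u ^ 2 = ‖B‖)
    (s : ℝ) : cheungQuartic H A B (s * u, s) = 2 * s ^ 4 * (H + 2 * A + ‖B‖) := by
  have hcross : B * (s * u * (starRingEnd ℂ) s) ^ 2 = ((s ^ 4 * ‖B‖ : ℝ) : ℂ) := by
    rw [conj_ofReal, ofReal_mul, ← hBu]
    push_cast
    ring
  have habs : |s| ^ 4 = s ^ 4 := by rw [pow_abs, abs_of_nonneg (by positivity)]
  simp only [cheungQuartic, hcross, ofReal_re, norm_mul, hu, mul_one, Complex.norm_real,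
    Real.norm_eq_abs, sq_abs, habs]
  ring

theorem half_sum_sq_lt_three_mul_sq {H A c : ℝ} (hH : H < 0) (hc : 0 ≤ c)
    (h : H + 2 * A + c < 0) : (1 / 2) * (H ^ 2 + 2 * A ^ 2 + c ^ 2) < 3 * (H + A) ^ 2 := by
  have hc2 : c ^ 2 < (H + 2 * A) ^ 2 := by nlinarith
  nlinarith [mul_pos_of_neg_of_neg hH (by linarith : H + 2 * A < 0)]

/-- Pointwise inequality behind Theorem 1.6 (Cheung's Theorem 3.12): if the
quartic form `Q` is strictly negative on the unit sphere of `ℂ²`, then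
`(1/2)(H² + 2A² + |B|²) < 3(H + A)²`. -/
theorem cheung_pointwise_chern (H A : ℝ) (B : ℂ)
    (hneg : ∀ v : ℂ × ℂ, (‖v.1‖) ^ 2 + (‖v.2‖) ^ 2 = 1 →
      H * ((‖v.1‖) ^ 4 + (‖v.2‖) ^ 4)
        + 4 * A * (‖v.1‖) ^ 2 * (‖v.2‖) ^ 2
        + 2 * (B * (v.1 * (starRingEnd ℂ) v.2) ^ 2).re < 0) :
    (1 / 2) * (H ^ 2 + 2 * A ^ 2 + (‖B‖) ^ 2) < 3 * (H + A) ^ 2 := by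
  have hQ : ∀ v : ℂ × ℂ, ‖v.1‖ ^ 2 + ‖v.2‖ ^ 2 = 1 → cheungQuartic H A B v < 0 := hneg
  have hH : H < 0 := cheungQuartic_one_zero H A B ▸ hQ (1, 0) (by simp)
  obtain ⟨u, hu, hBu⟩ := exists_norm_eq_one_mul_sq_eq_norm B
  have hsq : (√2)⁻¹ ^ 2 = (1 / 2 : ℝ) := by rw [inv_pow, Real.sq_sqrt zero_le_two, one_div]
  have hdiag := hQ (((√2)⁻¹ : ℝ) * u, ((√2)⁻¹ : ℝ))
    (by simp only [norm_mul, hu, mul_one, Complex.norm_real, Real.norm_eq_abs, sq_abs, hsq]; norm_num)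
  rw [cheungQuartic_ofReal_mul hu hBu] at hdiag
  have hs4 : 0 < 2 * (√2)⁻¹ ^ 4 := by positivity
  exact half_sum_sq_lt_three_mul_sq hH (norm_nonneg B) (neg_of_mul_neg_right hdiag hs4.le)
end

section
/- Let H, A be real numbers and B a complex number with H < 0 and H + 2A + |B| < 0. Then (1/2)(H² + 2A² + |B|²) < 3(H + A)². -/
/-! Twice the difference of the two sides is `((H + 2A)² - |B|²) + 4H(H + 2A)`. The first term is
positive because `0 ≤ |B| < -(H + 2A)`, and the second because `H` and `H + 2A` are both negative. -/

theorem sq_lt_sq_of_add_neg {R : Type*} [CommRing R] [LinearOrder R] [IsStrictOrderedRing R]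
    {s b : R} (hb : 0 ≤ b) (h : s + b < 0) : b ^ 2 < s ^ 2 := by
  simpa only [neg_sq] using sq_lt_sq' (by linarith) (by linarith : b < -s)

/-- Purely algebraic form of the pointwise inequality behind Theorem 1.6: if
`H < 0` and `H + 2A + |B| < 0`, then `(1/2)(H² + 2A² + |B|²) < 3(H + A)²`. -/
theorem cheung_algebraic_inequality (H A : ℝ) (B : ℂ)
    (h1 : H < 0) (h2 : H + 2 * A + ‖B‖ < 0) :
    (1 / 2) * (H ^ 2 + 2 * A ^ 2 + ‖B‖ ^ 2) < 3 * (H + A) ^ 2 := by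
  have hsq : ‖B‖ ^ 2 < (H + 2 * A) ^ 2 := sq_lt_sq_of_add_neg (norm_nonneg B) h2
  have hprod : 0 < H * (H + 2 * A) :=
    mul_pos_of_neg_of_neg h1 (by linarith [norm_nonneg B])
  linear_combination (hsq + 4 * hprod) / 2
end
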